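/- There exists a constant C > 0 such that for every t > 0 and every h ∈ ℝ, ∫₀ᵗ ∫_ℝ (p_s(v+h) − p_s(v))² dv ds ≤ C·|h|, where p_s is the standard heat kernel. -/

import Mathlib

open MeasureTheory Real Set ProbabilityTheory

/-- The standard heat kernel `p_t(x) = (2πt)^{-1/2} exp(-x²/(2t))`. -/
noncomputable def heatKernel (t x : ℝ) : ℝ :=
  (1 / Real.sqrt (2 * Real.pi * t)) * Real.exp (-x ^ 2 / (2 * t))

/-!
Expanding the square and using the Gaussian identity
`p_s(x) p_s(y) = p_{2s}(x - y) p_{s/2}((x + y) / 2)`, the inner integral equals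
`2 (p_{2s}(0) - p_{2s}(h)) = (π s)^{-1/2} (1 - exp (-h² / (4s)))`. This is at most `(π s)^{-1/2}`
and at most `(π s)^{-1/2} h² / (4s)`; integrating the first bound over `s ≤ h² / 4` and the
second over `s > h² / 4` bounds the time integral by `2 |h| / √π`, uniformly in `t`.
-/

lemma integral_Ioc_zero_rpow_neg_one_half {a : ℝ} (ha : 0 ≤ a) :
    ∫ s in Ioc 0 a, s ^ (-(1 / 2) : ℝ) = 2 * √a := by
  rw [← intervalIntegral.integral_of_le ha, integral_rpow (by norm_num), sqrt_eq_rpow]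
  norm_num
  ring

lemma integral_Ioi_rpow_neg_three_halves {a : ℝ} (ha : 0 < a) :
    ∫ s in Ioi a, s ^ (-(3 / 2) : ℝ) = 2 / √a := by
  rw [integral_Ioi_rpow_of_lt (by norm_num) ha, sqrt_eq_rpow, div_eq_mul_inv 2, ← rpow_neg ha.le]
  norm_num
  ring

lemma setIntegral_Ioc_zero_le_of_le_rpow {g : ℝ → ℝ} {c a : ℝ} (ha : 0 < a) (hg : Measurable g)
    (hg_nonneg : ∀ s, 0 < s → 0 ≤ g s) (hg_small : ∀ s, 0 < s → g s ≤ c * s ^ (-(1 / 2) : ℝ))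
    (hg_large : ∀ s, 0 < s → g s ≤ c * a * s ^ (-(3 / 2) : ℝ)) (t : ℝ) :
    ∫ s in Ioc 0 t, g s ≤ 4 * c * √a := by
  have hsmall : IntegrableOn (fun s ↦ c * s ^ (-(1 / 2) : ℝ)) (Ioc 0 a) :=
    ((intervalIntegrable_iff_integrableOn_Ioc_of_le ha.le).1
      (intervalIntegral.intervalIntegrable_rpow' (by norm_num))).const_mul c
  have hlarge : IntegrableOn (fun s ↦ c * a * s ^ (-(3 / 2) : ℝ)) (Ioi a) :=
    (integrableOn_Ioi_rpow_of_lt (by norm_num) ha).const_mul _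
  have hg_Ioc : IntegrableOn g (Ioc 0 a) := by
    refine hsmall.mono' hg.aestronglyMeasurable.restrict ?_
    filter_upwards [ae_restrict_mem measurableSet_Ioc] with s hs
    rw [norm_of_nonneg (hg_nonneg s hs.1)]
    exact hg_small s hs.1
  have hg_Ioi : IntegrableOn g (Ioi a) := by
    refine hlarge.mono' hg.aestronglyMeasurable.restrict ?_
    filter_upwards [ae_restrict_mem measurableSet_Ioi] with s hs
    rw [norm_of_nonneg (hg_nonneg s (ha.trans hs))]
    exact hg_large s (ha.trans hs)
  have hg_split : ∫ s in Ioi 0, g s = (∫ s in Ioc 0 a, g s) + ∫ s in Ioi a, g s := by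
    rw [← setIntegral_union (Ioc_disjoint_Ioi le_rfl) measurableSet_Ioi hg_Ioc hg_Ioi,
      Ioc_union_Ioi_eq_Ioi ha.le]
  calc ∫ s in Ioc 0 t, g s
      ≤ ∫ s in Ioi 0, g s := by
        refine setIntegral_mono_set ?_ ?_ Ioc_subset_Ioi_self.eventuallyLE
        · rw [← Ioc_union_Ioi_eq_Ioi ha.le]
          exact hg_Ioc.union hg_Ioi
        · filter_upwards [ae_restrict_mem measurableSet_Ioi] with s hs using hg_nonneg s hs
    _ ≤ (∫ s in Ioc 0 a, c * s ^ (-(1 / 2) : ℝ)) + ∫ s in Ioi a, c * a * s ^ (-(3 / 2) : ℝ) := by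
        rw [hg_split]
        exact add_le_add
          (setIntegral_mono_on hg_Ioc hsmall measurableSet_Ioc fun s hs ↦ hg_small s hs.1)
          (setIntegral_mono_on hg_Ioi hlarge measurableSet_Ioi fun s hs ↦ hg_large s (ha.trans hs))
    _ = 4 * c * √a := by
        rw [integral_const_mul, integral_const_mul, integral_Ioc_zero_rpow_neg_one_half ha.le,
          integral_Ioi_rpow_neg_three_halves ha]
        have : √a ≠ 0 := by positivity
        field_simp
        rw [sq_sqrt ha.le]
        ring

section HeatKernel

variable {t s : ℝ}

lemma heatKernel_nonneg (t x : ℝ) : 0 ≤ heatKernel t x := by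
  unfold heatKernel
  positivity

lemma heatKernel_eq_gaussianPDFReal (ht : 0 ≤ t) :
    heatKernel t = gaussianPDFReal 0 t.toNNReal := by
  ext x
  simp [heatKernel, gaussianPDFReal, Real.coe_toNNReal _ ht]

lemma integrable_heatKernel (ht : 0 ≤ t) : Integrable (heatKernel t) := by
  rw [heatKernel_eq_gaussianPDFReal ht]
  exact integrable_gaussianPDFReal 0 _

lemma integral_heatKernel (ht : 0 < t) : ∫ x, heatKernel t x = 1 := by
  rw [heatKernel_eq_gaussianPDFReal ht.le]
  exact integral_gaussianPDFReal_eq_one 0 (by simpa using ht)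

lemma heatKernel_mul_heatKernel (hs : 0 < s) (x y : ℝ) :
    heatKernel s x * heatKernel s y =
      heatKernel (2 * s) (x - y) * heatKernel (s / 2) ((x + y) / 2) := by
  have hsqrt : √(2 * π * s) * √(2 * π * s) = √(2 * π * (2 * s)) * √(2 * π * (s / 2)) := by
    rw [← sqrt_mul (by positivity), ← sqrt_mul (by positivity)]
    ring_nf
  unfold heatKernel
  rw [mul_mul_mul_comm (1 / √(2 * π * s)), mul_mul_mul_comm (1 / √(2 * π * (2 * s))),
    ← exp_add, ← exp_add, one_div_mul_one_div, one_div_mul_one_div, hsqrt]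
  congr 2
  field_simp
  ring

lemma heatKernel_add_mul_heatKernel_add (hs : 0 < s) (a b : ℝ) :
    (fun v ↦ heatKernel s (v + a) * heatKernel s (v + b)) =
      fun v ↦ heatKernel (2 * s) (a - b) * heatKernel (s / 2) (v + (a + b) / 2) := by
  ext v
  rw [heatKernel_mul_heatKernel hs, add_sub_add_left_eq_sub]
  ring_nf

lemma integrable_heatKernel_add_mul_heatKernel_add (hs : 0 < s) (a b : ℝ) :
    Integrable fun v ↦ heatKernel s (v + a) * heatKernel s (v + b) := by
  rw [heatKernel_add_mul_heatKernel_add hs]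
  exact ((integrable_heatKernel (by positivity)).comp_add_right _).const_mul _

lemma integral_heatKernel_add_mul_heatKernel_add (hs : 0 < s) (a b : ℝ) :
    ∫ v, heatKernel s (v + a) * heatKernel s (v + b) = heatKernel (2 * s) (a - b) := by
  rw [heatKernel_add_mul_heatKernel_add hs, integral_const_mul,
    integral_add_right_eq_self (heatKernel (s / 2)), integral_heatKernel (by positivity), mul_one]

lemma integral_heatKernel_add_sub_heatKernel_sq (hs : 0 < s) (h : ℝ) :
    ∫ v, (heatKernel s (v + h) - heatKernel s v) ^ 2 =
      2 * (heatKernel (2 * s) 0 - heatKernel (2 * s) h) := by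
  have hint := integrable_heatKernel_add_mul_heatKernel_add hs
  have hint' := integral_heatKernel_add_mul_heatKernel_add hs
  have hsq : ∀ v, (heatKernel s (v + h) - heatKernel s v) ^ 2 =
      heatKernel s (v + h) * heatKernel s (v + h) + heatKernel s (v + 0) * heatKernel s (v + 0)
        - 2 * (heatKernel s (v + h) * heatKernel s (v + 0)) := fun v ↦ by ring_nf
  simp_rw [hsq]
  rw [integral_sub ((hint h h).fun_add (hint 0 0)) ((hint h 0).const_mul 2),
    integral_add (hint h h) (hint 0 0), integral_const_mul, hint', hint', hint']
  ring_nf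

lemma heatKernel_eq_heatKernel_zero_mul (t x : ℝ) :
    heatKernel t x = heatKernel t 0 * exp (-x ^ 2 / (2 * t)) := by
  simp [heatKernel]

lemma heatKernel_le_heatKernel_zero (ht : 0 ≤ t) (x : ℝ) : heatKernel t x ≤ heatKernel t 0 := by
  rw [heatKernel_eq_heatKernel_zero_mul t x]
  refine mul_le_of_le_one_right (heatKernel_nonneg t 0) (exp_le_one_iff.2 ?_)
  exact div_nonpos_of_nonpos_of_nonneg (neg_nonpos.2 (sq_nonneg x)) (by positivity)

lemma heatKernel_zero_sub_le (t x : ℝ) :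
    heatKernel t 0 - heatKernel t x ≤ heatKernel t 0 * (x ^ 2 / (2 * t)) := by
  rw [heatKernel_eq_heatKernel_zero_mul t x, ← mul_one_sub]
  refine mul_le_mul_of_nonneg_left ?_ (heatKernel_nonneg t 0)
  have := add_one_le_exp (-x ^ 2 / (2 * t))
  rw [neg_div] at this ⊢
  linarith

lemma two_mul_heatKernel_two_mul_zero (hs : 0 < s) :
    2 * heatKernel (2 * s) 0 = (√π)⁻¹ * s ^ (-(1 / 2) : ℝ) := by
  have : √(2 * π * (2 * s)) = 2 * (√π * √s) := by
    rw [← sqrt_mul pi_pos.le, show 2 * π * (2 * s) = 2 ^ 2 * (π * s) by ring,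
      sqrt_mul (by positivity), sqrt_sq (by norm_num)]
  rw [rpow_neg hs.le, ← sqrt_eq_rpow, heatKernel, this]
  simp only [one_div, mul_inv_rev, ne_eq, OfNat.ofNat_ne_zero, not_false_eq_true, zero_pow,
    neg_zero, zero_div, exp_zero, mul_one]
  field_simp

lemma two_mul_heatKernel_two_mul_zero_sub_le (hs : 0 < s) (x : ℝ) :
    2 * (heatKernel (2 * s) 0 - heatKernel (2 * s) x) ≤
      (√π)⁻¹ * (x / 2) ^ 2 * s ^ (-(3 / 2) : ℝ) := by
  have hrpow : s ^ (-(3 / 2) : ℝ) = s ^ (-(1 / 2) : ℝ) * s⁻¹ := by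
    rw [← rpow_neg_one, ← rpow_add hs]
    norm_num
  calc 2 * (heatKernel (2 * s) 0 - heatKernel (2 * s) x)
      ≤ 2 * heatKernel (2 * s) 0 * (x ^ 2 / (2 * (2 * s))) := by
        linarith [heatKernel_zero_sub_le (2 * s) x]
    _ = (√π)⁻¹ * (x / 2) ^ 2 * s ^ (-(3 / 2) : ℝ) := by
        rw [two_mul_heatKernel_two_mul_zero hs, hrpow]
        field_simp

end HeatKernel

theorem heat_increment_upper_bound :
    ∃ C : ℝ, 0 < C ∧ ∀ t : ℝ, 0 < t → ∀ h : ℝ,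
      (∫ s in Set.Ioc (0 : ℝ) t, ∫ v : ℝ, (heatKernel s (v + h) - heatKernel s v) ^ 2)
        ≤ C * |h| := by
  refine ⟨2 / √π, by positivity, fun t _ h ↦ ?_⟩
  rw [setIntegral_congr_fun measurableSet_Ioc
    fun s hs ↦ integral_heatKernel_add_sub_heatKernel_sq hs.1 h]
  rcases eq_or_ne h 0 with rfl | hh
  · simp
  have hbound := setIntegral_Ioc_zero_le_of_le_rpow
    (g := fun s ↦ 2 * (heatKernel (2 * s) 0 - heatKernel (2 * s) h)) (c := (√π)⁻¹)
    (a := (h / 2) ^ 2) (by positivity) (by unfold heatKernel; fun_prop)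
    (fun s hs ↦ by
      have := heatKernel_le_heatKernel_zero (by positivity : 0 ≤ 2 * s) h
      linarith)
    (fun s hs ↦ by
      rw [← two_mul_heatKernel_two_mul_zero hs]
      linarith [heatKernel_nonneg (2 * s) h])
    (fun s hs ↦ two_mul_heatKernel_two_mul_zero_sub_le hs h) t
  calc _ ≤ 4 * (√π)⁻¹ * √((h / 2) ^ 2) := hbound
    _ = 2 / √π * |h| := by
        rw [sqrt_sq_eq_abs, abs_div, abs_two]
        ring
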